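/- Let G be a connected graph, let a and b be adjacent vertices of G, and let G' be the connected component of G - a containing b. If b is a cutpoint of G', then u(G) ≥ u(G') + 1, where u(H) denotes the maximum number of leaves in a spanning tree of H. -/

import Mathlib

open SimpleGraph

/-- Degree of a vertex (works without decidability assumptions). -/
noncomputable def ndeg {V : Type*} (G : SimpleGraph V) (v : V) : ℕ :=
  Nat.card (G.neighborSet v)

/-- Number of leaves (vertices of degree 1) of a graph. -/
noncomputable def numLeaves {V : Type*} (T : SimpleGraph V) : ℕ :=
  Nat.card {v : V | ndeg T v = 1}

/-- A spanning tree of `G` is a tree `T ≤ G` on the same vertex set. -/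
def IsSpanningTreeOf {V : Type*} (T G : SimpleGraph V) : Prop :=
  T ≤ G ∧ T.IsTree

/-- `maxLeaves G` is `u(G)`, the maximum number of leaves over all spanning trees. -/
noncomputable def maxLeaves {V : Type*} (G : SimpleGraph V) : ℕ :=
  sSup {n : ℕ | ∃ T : SimpleGraph V, IsSpanningTreeOf T G ∧ numLeaves T = n}

/-! Take a spanning tree `T'` of `G'` with `u(G')` leaves, add the edge `ab` and extend the
resulting forest to a spanning tree `T` of `G`. Being acyclic, `T` has no further edges among the
vertices of `G'` and `a`, so every leaf of `T'` other than `b` is still a leaf of `T`; and `b` is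
not a leaf of `T'`, since deleting a leaf of a spanning tree leaves the graph connected. Finally
`ab` is the only edge of `T` leaving `V ∖ S`, so the vertex of `V ∖ S` farthest from `b` in `T` is a
new leaf. -/

lemma Finite.card_lt_of_injective_of_notMem {α β : Type*} [Finite β] (f : α → β)
    (hf : Function.Injective f) {b : β} (hb : b ∉ Set.range f) : Nat.card α < Nat.card β := by
  have := Finite.of_injective f hf
  have := Fintype.ofFinite α
  have := Fintype.ofFinite β
  simpa only [Nat.card_eq_fintype_card] using Fintype.card_lt_of_injective_of_notMem f hf hb

namespace SimpleGraph

variable {V W : Type*} {G H T : SimpleGraph V}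

lemma ndeg_eq_degree (v : V) [Fintype (G.neighborSet v)] : ndeg G v = G.degree v :=
  Nat.card_eq_fintype_card.trans (G.card_neighborSet_eq_degree v)

lemma ndeg_eq_one_iff {v : V} : ndeg G v = 1 ↔ ∃! w, G.Adj v w := by
  rw [ndeg, Nat.card_eq_one_iff_exists]
  simp [ExistsUnique, Subtype.ext_iff]

lemma isAcyclic_of_isAcyclic_induce {s : Set V} (hs : ∀ ⦃x y⦄, G.Adj x y → x ∈ s)
    (h : (G.induce s).IsAcyclic) : G.IsAcyclic := by
  intro v c hc
  have hsupp : ∀ x ∈ c.support, x ∈ s := by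
    intro x hx
    obtain ⟨e, he, hxe⟩ := (Walk.mem_support_iff_exists_mem_edges_of_not_nil hc.not_nil).mp hx
    induction e with
    | h y z =>
      have hyz : G.Adj y z := c.adj_of_mem_edges he
      rcases Sym2.mem_iff.mp hxe with rfl | rfl
      exacts [hs hyz, hs hyz.symm]
  refine h (c.induce s hsupp) (Walk.IsCycle.of_map (f := (Embedding.induce s).toHom) ?_)
  rwa [Walk.map_induce]

lemma IsAcyclic.map (f : V ↪ W) (h : G.IsAcyclic) : (G.map f).IsAcyclic :=
  isAcyclic_of_isAcyclic_induce (s := Set.range f)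
    (by rintro _ _ ⟨-, u, -, -, rfl, -⟩; exact ⟨u, rfl⟩)
    ((Embedding.map f G).isoInduceRange.isAcyclic_iff.mp h)

lemma IsAcyclic.adj_of_le_of_reachable (hT : T.IsAcyclic) (hle : H ≤ T) {u v : V}
    (hr : H.Reachable u v) (hadj : T.Adj u v) : H.Adj u v := by
  obtain ⟨p, hp⟩ := hr.exists_isPath
  have := congrArg Walk.edges <| congrArg Subtype.val <|
    (hT.subsingleton_path u v).elim ⟨p.mapLe hle, hp.mapLe hle⟩ (Path.singleton hadj)
  simp only [Walk.edges_mapLe_eq_edges, Path.singleton_coe, Walk.edges_cons, Walk.edges_nil] at this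
  exact p.adj_of_mem_edges (by simp [this])

lemma IsTree.eq_of_adj_of_dist_eq_add_one (hT : T.IsTree) {b w y z : V} (hy : T.Adj w y)
    (hz : T.Adj w z) (hdy : T.dist b w = T.dist b y + 1) (hdz : T.dist b w = T.dist b z + 1) :
    y = z := by
  obtain ⟨p, hp, hpl⟩ := (hT.connected b w).exists_path_of_dist
  suffices key : ∀ x, T.Adj w x → T.dist b w = T.dist b x + 1 → x = p.penultimate by
    rw [key y hy hdy, key z hz hdz]
  intro x hx hdx
  obtain ⟨q, hq, hql⟩ := (hT.connected b x).exists_path_of_dist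
  have hwq : w ∉ q.support := by
    intro hw
    have := congrArg Walk.length (hT.isAcyclic.path_concat hp hq hx hw)
    rw [Walk.length_concat] at this
    omega
  exact hT.isAcyclic.eq_penultimate_of_adj_end hp hx
    (hT.isAcyclic.mem_support_of_ne_mem_support_of_adj_of_isPath hp hq hx hwq)

lemma IsTree.exists_ndeg_eq_one_mem [Finite V] (hT : T.IsTree) {U : Set V} (hU : U.Nonempty)
    {b : V} (hbU : b ∉ U) (hUb : ∀ x ∈ U, ∀ y, T.Adj x y → y ∈ U ∨ y = b) :
    ∃ w ∈ U, ndeg T w = 1 := by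
  obtain ⟨w, hwU, hwmax⟩ := U.exists_max_image (T.dist b) U.toFinite hU
  have hwb : w ≠ b := fun h => hbU (h ▸ hwU)
  obtain ⟨y, hy, -⟩ := Walk.exists_eq_cons_of_ne hwb (hT.connected w b).some
  have hcloser : ∀ x, T.Adj w x → T.dist b w = T.dist b x + 1 := by
    intro x hx
    refine (hT.dist_eq_dist_add_one_of_adj b hx).resolve_right fun hfar => ?_
    rcases hUb w hwU x hx with hxU | rfl
    · have := hwmax x hxU
      omega
    · simp at hfar
  exact ⟨w, hwU, ndeg_eq_one_iff.mpr ⟨y, hy, fun z hz =>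
    hT.eq_of_adj_of_dist_eq_add_one hz hy (hcloser z hz) (hcloser y hy)⟩⟩

lemma ndeg_ne_one_of_not_connected_induce [Finite V] (hT : IsSpanningTreeOf T G) {v : V}
    (hv : ¬ (G.induce {v}ᶜ).Connected) : ndeg T v ≠ 1 := by
  intro h
  classical
  have := Fintype.ofFinite V
  rw [ndeg_eq_degree] at h
  exact hv ((hT.2.connected.induce_compl_singleton_of_degree_eq_one h).mono
    (comap_monotone _ hT.1))

lemma numLeaves_le_card [Finite V] (T : SimpleGraph V) : numLeaves T ≤ Nat.card V :=
  (Nat.card_mono Set.finite_univ (Set.subset_univ _)).trans_eq Nat.card_univ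

lemma bddAbove_numLeaves_spanningTrees [Finite V] (G : SimpleGraph V) :
    BddAbove {n | ∃ T, IsSpanningTreeOf T G ∧ numLeaves T = n} := by
  refine ⟨Nat.card V, ?_⟩
  rintro _ ⟨T, -, rfl⟩
  exact numLeaves_le_card T

lemma numLeaves_le_maxLeaves [Finite V] (hT : IsSpanningTreeOf T G) :
    numLeaves T ≤ maxLeaves G :=
  le_csSup (bddAbove_numLeaves_spanningTrees G) ⟨T, hT, rfl⟩

lemma Connected.exists_numLeaves_eq_maxLeaves [Finite V] (hG : G.Connected) :
    ∃ T, IsSpanningTreeOf T G ∧ numLeaves T = maxLeaves G := by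
  obtain ⟨T, hTG, hT⟩ := hG.exists_isTree_le
  exact Nat.sSup_mem (s := {n | ∃ T, IsSpanningTreeOf T G ∧ numLeaves T = n})
    ⟨numLeaves T, T, ⟨hTG, hT⟩, rfl⟩ (bddAbove_numLeaves_spanningTrees G)

lemma numLeaves_add_one_le_numLeaves [Finite V] {S : Set V} {T' : SimpleGraph S}
    (hleaf : ∀ x, ndeg T' x = 1 → ndeg T x = 1) {w : V} (hwS : w ∉ S) (hw : ndeg T w = 1) :
    numLeaves T' + 1 ≤ numLeaves T := by
  let f : {x : S | ndeg T' x = 1} → {v : V | ndeg T v = 1} := fun x => ⟨x.1, hleaf x.1 x.2⟩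
  have hf : Function.Injective f := fun x y h => Subtype.ext (Subtype.ext (congrArg (·.1) h))
  refine Finite.card_lt_of_injective_of_notMem f hf (b := ⟨w, hw⟩) ?_
  rintro ⟨x, hx⟩
  have hxw : ((x : S) : V) = w := congrArg Subtype.val hx
  exact hwS (hxw ▸ x.1.2)

lemma Connected.exists_isTree_map_subtype_sup_edge_le (hG : G.Connected) {S : Set V} {a b : V}
    (hab : G.Adj a b) (ha : a ∉ S) {T' : SimpleGraph S} (hT'G : T' ≤ G.induce S)
    (hT' : T'.IsAcyclic) :
    ∃ T, T'.map (Function.Embedding.subtype _) ⊔ edge a b ≤ T ∧ T ≤ G ∧ T.IsTree := by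
  refine hG.exists_isTree_le_of_le_of_isAcyclic
    (sup_le ((map_le_iff_le_comap _ _ _).mpr hT'G) ((edge_le_iff G).mpr (.inr hab)))
    ((hT'.map _).sup_edge_of_not_reachable ?_)
  rintro ⟨p⟩
  obtain ⟨-, ⟨-, u, -, -, hu, -⟩, -⟩ := Walk.exists_eq_cons_of_ne hab.ne p
  exact ha (hu ▸ u.2)

lemma numLeaves_add_one_le_maxLeaves [Finite V] (hG : G.Connected) {S : Set V} {a b : V}
    (hab : G.Adj a b) (ha : a ∉ S) (hb : b ∈ S) (hS : ∀ x ∈ S, ∀ y, G.Adj x y → y ∈ S ∨ y = a)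
    {T' : SimpleGraph S} (hT' : IsSpanningTreeOf T' (G.induce S))
    (hbT' : ndeg T' ⟨b, hb⟩ ≠ 1) : numLeaves T' + 1 ≤ maxLeaves G := by
  set F := T'.map (Function.Embedding.subtype _)
  obtain ⟨T, hFT, hTG, hT⟩ := hG.exists_isTree_map_subtype_sup_edge_le hab ha hT'.1 hT'.2.isAcyclic
  have hF : ∀ x y : S, F.Reachable x y := fun x y =>
    (hT'.2.connected x y).map (Embedding.map _ T').toHom
  have hTS : ∀ x y : S, T.Adj x y → T'.Adj x y := fun x y h =>
    map_adj_apply.mp (hT.isAcyclic.adj_of_le_of_reachable (le_sup_left.trans hFT) (hF x y) h)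
  have hTa : ∀ x : S, T.Adj x a → (x : V) = b := by
    intro x h
    have hr : (F ⊔ edge a b).Reachable x a :=
      ((hF x ⟨b, hb⟩).mono le_sup_left).trans (Adj.reachable (Or.inr
        ((edge_adj ..).mpr ⟨.inr ⟨rfl, rfl⟩, hab.ne'⟩)))
    rcases hT.isAcyclic.adj_of_le_of_reachable hFT hr h with ⟨-, -, u, -, -, hu⟩ | h
    · exact absurd (hu ▸ u.2) ha
    · rcases ((edge_adj ..).mp h).1 with ⟨-, h⟩ | ⟨h, -⟩
      exacts [absurd h hab.ne, h]
  have hleaf : ∀ x : S, ndeg T' x = 1 → ndeg T x = 1 := by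
    intro x hx
    obtain ⟨y, hy, huniq⟩ := ndeg_eq_one_iff.mp hx
    have hxb : (x : V) ≠ b := fun h => hbT' (by rwa [show x = ⟨b, hb⟩ from Subtype.ext h] at hx)
    refine ndeg_eq_one_iff.mpr ⟨y, le_sup_left.trans hFT (map_adj_apply.mpr hy), fun z hz => ?_⟩
    rcases hS x x.2 z (hTG hz) with hzS | rfl
    · exact congrArg Subtype.val (huniq ⟨z, hzS⟩ (hTS x ⟨z, hzS⟩ hz))
    · exact absurd (hTa x hz) hxb
  obtain ⟨w, hwS, hw⟩ := hT.exists_ndeg_eq_one_mem (U := Sᶜ) ⟨a, ha⟩ (not_not.mpr hb)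
    fun x hx y hxy => by
      by_cases hyS : y ∈ S
      · rcases hS y hyS x (hTG hxy.symm) with hxS | rfl
        exacts [absurd hxS hx, .inr (hTa ⟨y, hyS⟩ hxy.symm)]
      · exact .inl hyS
  exact (numLeaves_add_one_le_numLeaves hleaf hwS hw).trans (numLeaves_le_maxLeaves ⟨hTG, hT⟩)

section WalkAvoiding

variable {a b : V}

lemma exists_walk_avoiding_or_eq_of_adj {x y : V} (hx : ∃ p : G.Walk b x, a ∉ p.support)
    (hxy : G.Adj x y) :
    (∃ p : G.Walk b y, a ∉ p.support) ∨ y = a := by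
  obtain ⟨p, hp⟩ := hx
  refine or_iff_not_imp_right.mpr fun hya => ⟨p.concat hxy, ?_⟩
  simp [Walk.support_concat, hp, Ne.symm hya]

lemma notMem_walk_avoiding : a ∉ {v | ∃ p : G.Walk b v, a ∉ p.support} :=
  fun ⟨p, hp⟩ => hp p.end_mem_support

lemma connected_induce_walk_avoiding (hab : a ≠ b) :
    (G.induce {v | ∃ p : G.Walk b v, a ∉ p.support}).Connected := by
  classical
  set S := {v | ∃ p : G.Walk b v, a ∉ p.support}
  have hb : b ∈ S := ⟨.nil, by simpa using hab⟩
  refine (connected_iff_exists_forall_reachable _).mpr ⟨⟨b, hb⟩, ?_⟩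
  rintro ⟨v, p, hp⟩
  exact ⟨p.induce S fun x hx =>
    ⟨p.takeUntil x hx, fun ha => hp (p.support_takeUntil_subset_support hx ha)⟩⟩

end WalkAvoiding

end SimpleGraph

theorem stmt_3 {V : Type*} [Fintype V] (G : SimpleGraph V) (hconn : G.Connected)
    (a b : V) (hab : G.Adj a b)
    -- `S` is the vertex set of the connected component of `G - a` containing `b`
    (S : Set V) (hS : S = {v : V | ∃ p : G.Walk b v, a ∉ p.support})
    -- `b` is a cutpoint of `G' = G.induce S`
    (hb : b ∈ S)
    (hcut : ¬ ((G.induce S).induce {x : S | (x : V) ≠ b}).Connected) :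
    maxLeaves (G.induce S) + 1 ≤ maxLeaves G := by
  have hSconn : (G.induce S).Connected := hS ▸ connected_induce_walk_avoiding hab.ne
  have hSclosed : ∀ x ∈ S, ∀ y, G.Adj x y → y ∈ S ∨ y = a :=
    hS ▸ fun _ hx _ hxy => exists_walk_avoiding_or_eq_of_adj hx hxy
  obtain ⟨T', hT', hT'max⟩ := hSconn.exists_numLeaves_eq_maxLeaves
  have hbT' : ndeg T' ⟨b, hb⟩ ≠ 1 := by
    refine ndeg_ne_one_of_not_connected_induce hT' ?_
    rwa [show ({⟨b, hb⟩}ᶜ : Set S) = {x : S | (x : V) ≠ b} by ext; simp [Subtype.ext_iff]]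
  rw [← hT'max]
  exact numLeaves_add_one_le_maxLeaves hconn hab (hS ▸ notMem_walk_avoiding) hb hSclosed hT' hbT'
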